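/- Let N be a closed smooth oriented 14-dimensional manifold, let κ_b, κ_{b̄} ∈ H^1(N; Z/2) be two cohomology classes, and suppose the stable normal bundle of N is isomorphic to k·λ_b ⊕ k·λ_{b̄}, where λ_b, λ_{b̄} are real line bundles with first Stiefel–Whitney classes κ_b, κ_{b̄} respectively, and k ≡ 0 (mod 8). Then the characteristic number ⟨κ_b · κ_{b̄}^{13}, [N]⟩ ∈ Z/2 vanishes. -/

import Mathlib

/-!
Since `8 ∣ k`, in characteristic 2 we have `(1 + κ)^k = (1 + κ^8)^(k/8)`, which acts as the
identity on classes of degree at least 7. Pairing the normal-bundle relation with classes of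
degree 12 therefore shows `w₂ = 0` by Poincaré duality, and with `w₁ = 0` Wu's formula gives
`v₁ = v₂ = 0`, so `⟨Sq¹ x, [N]⟩ = ⟨Sq² y, [N]⟩ = 0` in degrees 13 and 12. By the Cartan formula
and `Sq^i (x^j) = (j choose i) x^(i+j)` for `x` of degree 1,
`Sq² (κ_b κ_{b̄}^11) + Sq¹ (κ_b κ_{b̄}^12) = κ_b κ_{b̄}^13`.
-/

/-- The mod-2 cohomology of a closed smooth `n`-manifold, axiomatized: a graded
commutative `ℤ/2`-algebra `R` vanishing above degree `n`, with Steenrod squares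
(satisfying instability and the Cartan formula), evaluation `ε` against the
`ℤ/2`-fundamental class (Kronecker pairing, supported in degree `n`), Poincaré
duality, the Wu classes `v k` (characterized by `⟨v_k · x, [N]⟩ = ⟨Sq^k x, [N]⟩`),
and the Stiefel–Whitney classes `w i` of the tangent bundle, which by Wu's
theorem satisfy `w = Sq(v)`. -/
structure ClosedManifoldMod2Cohomology (n : ℕ) (R : Type*) [CommRing R]
    [Algebra (ZMod 2) R] where
  /-- the degree-`i` part of the cohomology -/
  deg : ℕ → Submodule (ZMod 2) R
  one_mem : (1 : R) ∈ deg 0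
  mul_mem : ∀ {i j : ℕ} {x y : R}, x ∈ deg i → y ∈ deg j → x * y ∈ deg (i + j)
  deg_eq_bot : ∀ i : ℕ, n < i → deg i = ⊥
  decompose : ∀ x : R, ∃ c : ℕ → R, (∀ i, c i ∈ deg i) ∧
    x = ∑ i ∈ Finset.range (n + 1), c i
  /-- evaluation against the fundamental class -/
  ε : R →ₗ[ZMod 2] ZMod 2
  ε_deg : ∀ i : ℕ, i ≠ n → ∀ x ∈ deg i, ε x = 0
  /-- Poincaré duality: the intersection pairing is nondegenerate -/
  pd : ∀ i : ℕ, i ≤ n → ∀ x ∈ deg i, x ≠ 0 → ∃ y ∈ deg (n - i), ε (x * y) ≠ 0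
  /-- Steenrod squares -/
  sq : ℕ → R →ₗ[ZMod 2] R
  sq_deg : ∀ (k i : ℕ), ∀ x ∈ deg i, sq k x ∈ deg (i + k)
  sq_zero_of_lt : ∀ (k i : ℕ), ∀ x ∈ deg i, i < k → sq k x = 0
  sq_zero_eq_id : ∀ x : R, sq 0 x = x
  sq_eq_sq : ∀ k : ℕ, ∀ x ∈ deg k, sq k x = x * x
  sq_cartan : ∀ (k : ℕ) (x y : R),
    sq k (x * y) = ∑ p ∈ Finset.range (k + 1), sq p x * sq (k - p) y
  /-- Wu classes -/
  v : ℕ → R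
  v_deg : ∀ k, v k ∈ deg k
  v_spec : ∀ k : ℕ, ∀ x ∈ deg (n - k), ε (v k * x) = ε (sq k x)
  /-- Stiefel–Whitney classes of the tangent bundle -/
  w : ℕ → R
  w_deg : ∀ i, w i ∈ deg i
  /-- Wu's theorem: `w = Sq(v)` -/
  w_wu : ∀ m : ℕ, w m = ∑ k ∈ Finset.range (m + 1), sq k (v (m - k))

section CharTwo

variable {R : Type*} [CommRing R] [Algebra (ZMod 2) R]

theorem natCast_eq_natCast_mod_two (n : ℕ) : (n : R) = ((n % 2 : ℕ) : R) := by
  rw [← map_natCast (algebraMap (ZMod 2) R), ← map_natCast (algebraMap (ZMod 2) R),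
    ZMod.natCast_mod]

theorem two_eq_zero_of_zmod_two_algebra : (2 : R) = 0 := by
  simpa using natCast_eq_natCast_mod_two (R := R) 2

theorem one_add_pow_eight (x : R) : (1 + x) ^ 8 = 1 + x ^ 8 := by
  have frobenius (y : R) : (1 + y) ^ 2 = 1 + y ^ 2 := by
    rw [add_sq, two_eq_zero_of_zmod_two_algebra]; ring
  rw [show (1 + x) ^ 8 = (((1 + x) ^ 2) ^ 2) ^ 2 by ring, frobenius, frobenius, frobenius]
  ring

end CharTwo

theorem one_add_pow_mul_of_mul_eq_zero {R : Type*} [CommRing R] {z y : R} (h : z * y = 0)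
    (m : ℕ) : (1 + z) ^ m * y = y := by
  induction m with
  | zero => simp
  | succ m ih => rw [pow_succ, mul_assoc, add_mul, one_mul, h, add_zero, ih]

namespace ClosedManifoldMod2Cohomology

variable {n : ℕ} {R : Type*} [CommRing R] [Algebra (ZMod 2) R]
  (P : ClosedManifoldMod2Cohomology n R)

theorem pow_mem_deg {x : R} (hx : x ∈ P.deg 1) (j : ℕ) : x ^ j ∈ P.deg j := by
  induction j with
  | zero => simpa using P.one_mem
  | succ j ih => simpa [pow_succ] using P.mul_mem ih hx

theorem eq_zero_of_mem_deg {i : ℕ} (h : n < i) {x : R} (hx : x ∈ P.deg i) : x = 0 := by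
  rwa [P.deg_eq_bot i h, Submodule.mem_bot] at hx

theorem eq_zero_of_forall_ε_mul_eq_zero {i : ℕ} (hi : i ≤ n) {x : R} (hx : x ∈ P.deg i)
    (h : ∀ y ∈ P.deg (n - i), P.ε (x * y) = 0) : x = 0 := by
  by_contra hne
  obtain ⟨y, hy, hxy⟩ := P.pd i hi x hx hne
  exact hxy (h y hy)

theorem ε_sum_w_mul {j : ℕ} (hj : j ≤ n) {y : R} (hy : y ∈ P.deg j) :
    P.ε ((∑ i ∈ Finset.range (n + 1), P.w i) * y) = P.ε (P.w (n - j) * y) := by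
  rw [Finset.sum_mul, map_sum]
  refine Finset.sum_eq_single_of_mem _ (by simp only [Finset.mem_range]; omega) fun i _ hi => ?_
  exact P.ε_deg (i + j) (by omega) _ (P.mul_mem (P.w_deg i) hy)

theorem w_eq_zero_of_mul_eq_one {i : ℕ} (hi : 0 < i) (hin : i ≤ n) {Q : R}
    (hQ : (∑ i ∈ Finset.range (n + 1), P.w i) * Q = 1)
    (hQy : ∀ y ∈ P.deg (n - i), Q * y = y) : P.w i = 0 := by
  refine P.eq_zero_of_forall_ε_mul_eq_zero hin (P.w_deg i) fun y hy => ?_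
  calc P.ε (P.w i * y) = P.ε ((∑ i ∈ Finset.range (n + 1), P.w i) * y) := by
        rw [P.ε_sum_w_mul (Nat.sub_le n i) hy, Nat.sub_sub_self hin]
    _ = P.ε ((∑ i ∈ Finset.range (n + 1), P.w i) * Q * y) := by rw [mul_assoc, hQy y hy]
    _ = P.ε y := by rw [hQ, one_mul]
    _ = 0 := P.ε_deg (n - i) (by omega) y hy

theorem one_add_pow_eight_mul_mul_eq_self {x : R} (hx : x ∈ P.deg 1) {j : ℕ} (hj : n < 8 + j)
    {y : R} (hy : y ∈ P.deg j) (m : ℕ) : (1 + x) ^ (8 * m) * y = y := by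
  rw [pow_mul, one_add_pow_eight]
  exact one_add_pow_mul_of_mul_eq_zero
    (P.eq_zero_of_mem_deg hj (P.mul_mem (P.pow_mem_deg hx 8) hy)) m

theorem w_one_eq_v_one : P.w 1 = P.v 1 := by
  rw [P.w_wu, Finset.sum_range_succ, Finset.sum_range_one,
    P.sq_zero_of_lt 1 0 _ (P.v_deg 0) one_pos, P.sq_zero_eq_id, add_zero]

theorem w_two_eq_v_two_add_sq_one_v_one : P.w 2 = P.v 2 + P.sq 1 (P.v 1) := by
  rw [P.w_wu, Finset.sum_range_succ, Finset.sum_range_succ, Finset.sum_range_one,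
    P.sq_zero_of_lt 2 0 _ (P.v_deg 0) two_pos, P.sq_zero_eq_id, add_zero]

theorem ε_sq_eq_zero_of_v_eq_zero {k : ℕ} (hv : P.v k = 0) {x : R} (hx : x ∈ P.deg (n - k)) :
    P.ε (P.sq k x) = 0 := by
  rw [← P.v_spec k x hx, hv, zero_mul, map_zero]

theorem sq_succ_mul_of_mem_deg_one {a : R} (ha : a ∈ P.deg 1) (i : ℕ) (y : R) :
    P.sq (i + 1) (a * y) = a * P.sq (i + 1) y + a ^ 2 * P.sq i y := by
  rw [P.sq_cartan, Finset.sum_range_succ', Finset.sum_range_succ',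
    Finset.sum_eq_zero fun p _ => by rw [P.sq_zero_of_lt (p + 1 + 1) 1 a ha (by omega), zero_mul],
    P.sq_zero_eq_id, P.sq_eq_sq 1 a ha]
  simp only [Nat.sub_zero, zero_add, Nat.add_sub_cancel]
  ring

theorem sq_pow_of_mem_deg_one {x : R} (hx : x ∈ P.deg 1) (i j : ℕ) :
    P.sq i (x ^ j) = (j.choose i : R) * x ^ (j + i) := by
  induction j generalizing i with
  | zero =>
    rcases i with _ | i
    · simp [P.sq_zero_eq_id]
    · simp [P.sq_zero_of_lt (i + 1) 0 1 P.one_mem (by omega)]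
  | succ j ih =>
    rcases i with _ | i
    · simp [P.sq_zero_eq_id]
    · rw [pow_succ', P.sq_succ_mul_of_mem_deg_one hx, ih, ih, Nat.choose_succ_succ']
      push_cast
      ring

end ClosedManifoldMod2Cohomology

open ClosedManifoldMod2Cohomology

/-- Let `N` be a closed smooth oriented 14-manifold whose stable normal bundle is
`k·λ_b ⊕ k·λ_{b̄}` with `k ≡ 0 (mod 8)`, where `λ_b, λ_{b̄}` are line bundles with
first Stiefel–Whitney classes `κ_b, κ_{b̄} ∈ H¹(N; ℤ/2)` (so that the total
tangent Stiefel–Whitney class satisfies `w(TN)·(1+κ_b)^k·(1+κ_{b̄})^k = 1`).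
Then the characteristic number `⟨κ_b · κ_{b̄}¹³, [N]⟩ ∈ ℤ/2` vanishes. -/
theorem stmt_17 (R : Type*) [CommRing R] [Algebra (ZMod 2) R]
    (P : ClosedManifoldMod2Cohomology 14 R)
    (horient : P.w 1 = 0)
    (κb κbb : R) (hκb : κb ∈ P.deg 1) (hκbb : κbb ∈ P.deg 1)
    (k : ℕ) (hk : 8 ∣ k)
    (hnormal : (∑ i ∈ Finset.range 15, P.w i) * ((1 + κb) ^ k * (1 + κbb) ^ k) = 1) :
    P.ε (κb * κbb ^ 13) = 0 := by
  obtain ⟨m, rfl⟩ := hk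
  have hw2 : P.w 2 = 0 := P.w_eq_zero_of_mul_eq_one two_pos (by norm_num) hnormal fun y hy => by
    rw [mul_assoc, P.one_add_pow_eight_mul_mul_eq_self hκbb (by norm_num) hy,
      P.one_add_pow_eight_mul_mul_eq_self hκb (by norm_num) hy]
  have hv1 : P.v 1 = 0 := P.w_one_eq_v_one ▸ horient
  have hv2 : P.v 2 = 0 := by
    simpa [hw2, hv1] using P.w_two_eq_v_two_add_sq_one_v_one.symm
  have hSq1 : P.ε (κb ^ 2 * κbb ^ 12) = 0 := by
    have h := P.ε_sq_eq_zero_of_v_eq_zero hv1 (x := κb * κbb ^ 12)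
      (by simpa using P.mul_mem hκb (P.pow_mem_deg hκbb 12))
    rw [P.sq_succ_mul_of_mem_deg_one hκb 0, P.sq_zero_eq_id, P.sq_pow_of_mem_deg_one hκbb,
      natCast_eq_natCast_mod_two] at h
    norm_num [Nat.choose] at h
    exact h
  have hSq2 : P.ε (κb * κbb ^ 13) + P.ε (κb ^ 2 * κbb ^ 12) = 0 := by
    have h := P.ε_sq_eq_zero_of_v_eq_zero hv2 (x := κb * κbb ^ 11)
      (by simpa using P.mul_mem hκb (P.pow_mem_deg hκbb 11))
    rw [P.sq_succ_mul_of_mem_deg_one hκb 1, P.sq_pow_of_mem_deg_one hκbb,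
      P.sq_pow_of_mem_deg_one hκbb, natCast_eq_natCast_mod_two,
      natCast_eq_natCast_mod_two (Nat.choose 11 1)] at h
    norm_num [Nat.choose] at h
    exact h
  rwa [hSq1, add_zero] at hSq2
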